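/- arXiv:2108.01629 — 2 statements merged into one kernel-verified Lean document; each statement's English description precedes it below -/
import Mathlib

section
/- In the same setting, for z in the open upper half-plane and 0 ≤ x₁ ≤ x₂, (T(x₂,z)* j T(x₂,z) - T(x₁,z)* j T(x₁,z))/i is negative semidefinite. -/
/-! Fix `v` and put `w x = T x z *ᵥ v`. The quadratic form of the matrix at `v` is
`I * (w* j w)` taken between `x₁` and `x₂`. Since `j w' = M w` with `M = -z A + B` and `j` is
skew-Hermitian, `(w* j w)' = w* (M - Mᴴ) w = (conj z - z) w* A w` for real symmetric `A`, `B`, so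
the form equals `2 Im z ∫ w* A w ≥ 0`. As `w` is only absolutely continuous, the product rule
behind `(w* j w)'` is obtained from Fubini's theorem on a square cut along its diagonal. -/

open Matrix MeasureTheory
open scoped ComplexOrder

/-- j = [[0,-1],[1,0]]. -/
noncomputable def jmat : Matrix (Fin 2) (Fin 2) ℂ := !![0, -1; 1, 0]

/-- Complexification of a real 2×2 matrix. -/
noncomputable def cplx (A : Matrix (Fin 2) (Fin 2) ℝ) : Matrix (Fin 2) (Fin 2) ℂ :=
  A.map Complex.ofReal

open scoped ComplexConjugate

section IntervalIntegrable

variable {μ : Measure ℝ} {a b : ℝ}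

theorem IntervalIntegrable.conj {𝕜 : Type*} [RCLike 𝕜] {f : ℝ → 𝕜}
    (hf : IntervalIntegrable f μ a b) : IntervalIntegrable (fun x => conj (f x)) μ a b :=
  ⟨(RCLike.conjCLE (K := 𝕜)).integrable_comp_iff.2 hf.1,
    (RCLike.conjCLE (K := 𝕜)).integrable_comp_iff.2 hf.2⟩

theorem IntervalIntegrable.ofReal {f : ℝ → ℝ} (hf : IntervalIntegrable f μ a b) :
    IntervalIntegrable (fun x => (f x : ℂ)) μ a b :=
  ⟨hf.1.ofReal, hf.2.ofReal⟩

end IntervalIntegrable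

section ProductRule

variable {𝕜 : Type*} [RCLike 𝕜] {a b : ℝ}

theorem integral_mul_integral_eq_sum_triangles {f g : ℝ → 𝕜} (hab : a ≤ b)
    (hf : IntervalIntegrable f volume a b) (hg : IntervalIntegrable g volume a b) :
    (∫ x in a..b, f x) * (∫ x in a..b, g x)
      = (∫ x in a..b, f x * ∫ t in a..x, g t) + ∫ x in a..b, (∫ t in a..x, f t) * g x := by
  set μ := volume.restrict (Set.Ioc a b)
  have hprod : Integrable (fun p : ℝ × ℝ => f p.1 * g p.2) (μ.prod μ) := hf.1.mul_prod hg.1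
  have hD : MeasurableSet {p : ℝ × ℝ | p.2 ≤ p.1} :=
    measurableSet_le measurable_snd measurable_fst
  have lower : ∫ p in {p : ℝ × ℝ | p.2 ≤ p.1}, f p.1 * g p.2 ∂(μ.prod μ)
      = ∫ x in a..b, f x * ∫ t in a..x, g t := by
    rw [← integral_indicator hD, integral_prod _ (hprod.indicator hD),
      intervalIntegral.integral_of_le hab]
    refine setIntegral_congr_fun measurableSet_Ioc fun x hx => ?_
    have hslice : Set.Iic x ∩ Set.Ioc a b = Set.Ioc a x := by
      ext t; simp only [Set.mem_inter_iff, Set.mem_Iic, Set.mem_Ioc]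
      exact ⟨fun h => ⟨h.2.1, h.1⟩, fun h => ⟨h.2, h.1, h.2.trans hx.2⟩⟩
    simp_rw [Set.indicator_apply, Set.mem_ofPred_eq, ← Set.mem_Iic,
      ← Set.indicator_apply (s := Set.Iic x) (f := fun y => f x * g y)]
    rw [integral_indicator measurableSet_Iic, Measure.restrict_restrict measurableSet_Iic, hslice,
      integral_const_mul, intervalIntegral.integral_of_le hx.1.le]
  have upper : ∫ p in {p : ℝ × ℝ | p.2 ≤ p.1}ᶜ, f p.1 * g p.2 ∂(μ.prod μ)
      = ∫ x in a..b, (∫ t in a..x, f t) * g x := by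
    rw [← integral_indicator hD.compl, integral_prod_symm _ (hprod.indicator hD.compl),
      intervalIntegral.integral_of_le hab]
    refine setIntegral_congr_fun measurableSet_Ioc fun y hy => ?_
    have hslice : Set.Iio y ∩ Set.Ioc a b = Set.Ioo a y := by
      ext t; simp only [Set.mem_inter_iff, Set.mem_Iio, Set.mem_Ioc, Set.mem_Ioo]
      exact ⟨fun h => ⟨h.2.1, h.1⟩, fun h => ⟨h.2, h.1, h.2.le.trans hy.2⟩⟩
    simp_rw [Set.indicator_apply, Set.mem_compl_iff, Set.mem_ofPred_eq, not_le, ← Set.mem_Iio,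
      ← Set.indicator_apply (s := Set.Iio y) (f := fun x => f x * g y)]
    rw [integral_indicator measurableSet_Iio, Measure.restrict_restrict measurableSet_Iio, hslice,
      integral_mul_const, intervalIntegral.integral_of_le hy.1.le, integral_Ioc_eq_integral_Ioo]
  rw [intervalIntegral.integral_of_le hab, intervalIntegral.integral_of_le hab,
    ← integral_prod_mul, ← integral_add_compl hD hprod, lower, upper]

theorem continuousOn_of_eq_add_primitive {u u' : ℝ → 𝕜} (hab : a ≤ b)
    (hu' : IntervalIntegrable u' volume a b)
    (hu : ∀ x ∈ Set.Icc a b, u x = u a + ∫ t in a..x, u' t) :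
    ContinuousOn u (Set.Icc a b) := by
  have hF := intervalIntegral.continuousOn_primitive_interval' hu' Set.left_mem_uIcc
  rw [Set.uIcc_of_le hab] at hF
  exact (continuousOn_const.add hF).congr hu

theorem integral_mul_add_mul_eq_sub {u v u' v' : ℝ → 𝕜} (hab : a ≤ b)
    (hu' : IntervalIntegrable u' volume a b) (hv' : IntervalIntegrable v' volume a b)
    (hu : ∀ x ∈ Set.Icc a b, u x = u a + ∫ t in a..x, u' t)
    (hv : ∀ x ∈ Set.Icc a b, v x = v a + ∫ t in a..x, v' t) :
    ∫ x in a..b, (u' x * v x + u x * v' x) = u b * v b - u a * v a := by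
  set F := fun x => ∫ t in a..x, u' t
  set G := fun x => ∫ t in a..x, v' t
  have hI : Set.uIcc a b = Set.Icc a b := Set.uIcc_of_le hab
  have hFc : ContinuousOn F (Set.uIcc a b) :=
    intervalIntegral.continuousOn_primitive_interval' hu' Set.left_mem_uIcc
  have hGc : ContinuousOn G (Set.uIcc a b) :=
    intervalIntegral.continuousOn_primitive_interval' hv' Set.left_mem_uIcc
  have hsplit : ∀ x ∈ Set.uIcc a b, u' x * v x + u x * v' x
      = (u' x * v a + u a * v' x) + (u' x * G x + F x * v' x) := by
    intro x hx
    rw [hI] at hx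
    rw [hu x hx, hv x hx]
    ring
  rw [intervalIntegral.integral_congr hsplit,
    intervalIntegral.integral_add ((hu'.mul_const _).add (hv'.const_mul _))
      ((hu'.mul_continuousOn hGc).add (hv'.continuousOn_mul hFc)),
    intervalIntegral.integral_add (hu'.mul_const _) (hv'.const_mul _),
    intervalIntegral.integral_add (hu'.mul_continuousOn hGc) (hv'.continuousOn_mul hFc),
    ← integral_mul_integral_eq_sum_triangles hab hu' hv',
    intervalIntegral.integral_mul_const, intervalIntegral.integral_const_mul,
    hu b ⟨hab, le_rfl⟩, hv b ⟨hab, le_rfl⟩]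
  ring

theorem integral_star_dotProduct_mulVec_add_eq_sub {n : Type*} [Fintype n] (J : Matrix n n 𝕜)
    {w w' : ℝ → n → 𝕜} (hab : a ≤ b) (hw' : ∀ i, IntervalIntegrable (fun t => w' t i) volume a b)
    (hw : ∀ x ∈ Set.Icc a b, ∀ i, w x i = w a i + ∫ t in a..x, w' t i) :
    ∫ x in a..b, (star (w' x) ⬝ᵥ J *ᵥ w x + star (w x) ⬝ᵥ J *ᵥ w' x)
      = star (w b) ⬝ᵥ J *ᵥ w b - star (w a) ⬝ᵥ J *ᵥ w a := by
  have hcont : ∀ i, ContinuousOn (fun x => w x i) (Set.uIcc a b) := fun i => by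
    rw [Set.uIcc_of_le hab]
    exact continuousOn_of_eq_add_primitive hab (hw' i) fun x hx => hw x hx i
  have hconj : ∀ x ∈ Set.Icc a b, ∀ i,
      conj (w x i) = conj (w a i) + ∫ t in a..x, conj (w' t i) := fun x hx i => by
    rw [intervalIntegral.intervalIntegral_conj, ← map_add, ← hw x hx i]
  have hterm : ∀ i k, IntervalIntegrable (fun x => conj (w' x i) * (J i k * w x k)
      + conj (w x i) * (J i k * w' x k)) volume a b := fun i k =>
    ((hw' i).conj.mul_continuousOn (continuousOn_const.mul (hcont k))).add
      (((hw' k).const_mul _).continuousOn_mul ((hcont i).star))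
  have hexpand : ∀ u v : n → 𝕜, star u ⬝ᵥ J *ᵥ v = ∑ i, ∑ k, conj (u i) * (J i k * v k) := by
    intro u v
    simp only [dotProduct, mulVec, Finset.mul_sum, Pi.star_apply, RCLike.star_def]
  simp only [hexpand, ← Finset.sum_add_distrib, ← Finset.sum_sub_distrib]
  rw [intervalIntegral.integral_finsetSum fun i _ => by
    simpa only [Finset.sum_fn] using IntervalIntegrable.sum Finset.univ fun k _ => hterm i k]
  refine Finset.sum_congr rfl fun i _ => ?_
  rw [intervalIntegral.integral_finsetSum fun k _ => hterm i k]
  refine Finset.sum_congr rfl fun k _ => ?_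
  exact integral_mul_add_mul_eq_sub hab (hw' i).conj ((hw' k).const_mul _) (hconj · · i)
    fun x hx => by rw [hw x hx k, mul_add, intervalIntegral.integral_const_mul]

end ProductRule

section MatrixEntries

variable {𝕜 l m n : Type*} [RCLike 𝕜] {μ : Measure ℝ} {a b : ℝ}

theorem intervalIntegrable_mul_apply_of_continuousOn [Fintype m] {P : ℝ → Matrix l m 𝕜}
    {Q : ℝ → Matrix m n 𝕜} (hP : ∀ i j, IntervalIntegrable (fun t => P t i j) μ a b)
    (hQ : ∀ j k, ContinuousOn (fun t => Q t j k) (Set.uIcc a b)) (i : l) (k : n) :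
    IntervalIntegrable (fun t => (P t * Q t) i k) μ a b := by
  simpa only [mul_apply, Finset.sum_fn] using
    IntervalIntegrable.sum Finset.univ fun j _ => (hP i j).mul_continuousOn (hQ j k)

theorem intervalIntegrable_const_mul_apply [Fintype m] (C : Matrix l m 𝕜) {P : ℝ → Matrix m n 𝕜}
    (hP : ∀ j k, IntervalIntegrable (fun t => P t j k) μ a b) (i : l) (k : n) :
    IntervalIntegrable (fun t => (C * P t) i k) μ a b := by
  simpa only [mul_apply, Finset.sum_fn] using
    IntervalIntegrable.sum Finset.univ fun j _ => (hP j k).const_mul (C i j)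

theorem intervalIntegrable_mulVec_apply [Fintype n] {Y : ℝ → Matrix m n 𝕜}
    (hY : ∀ i k, IntervalIntegrable (fun t => Y t i k) μ a b) (v : n → 𝕜) (i : m) :
    IntervalIntegrable (fun t => (Y t *ᵥ v) i) μ a b := by
  simpa only [mulVec, dotProduct, Finset.sum_fn] using
    IntervalIntegrable.sum Finset.univ fun k _ => (hY i k).mul_const (v k)

theorem mulVec_apply_eq_add_integral [Fintype n] {X Y : ℝ → Matrix m n 𝕜} {x : ℝ}
    (hY : ∀ i k, IntervalIntegrable (fun t => Y t i k) volume a x)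
    (hX : ∀ i k, X x i k = X a i k + ∫ t in a..x, Y t i k) (v : n → 𝕜) (i : m) :
    (X x *ᵥ v) i = (X a *ᵥ v) i + ∫ t in a..x, (Y t *ᵥ v) i := by
  simp only [mulVec, dotProduct, hX, add_mul, Finset.sum_add_distrib]
  rw [intervalIntegral.integral_finsetSum fun k _ => (hY i k).mul_const (v k)]
  simp only [intervalIntegral.integral_mul_const]

end MatrixEntries

section SkewForm

variable {𝕜 n : Type*} [RCLike 𝕜] [Fintype n]

-- With `w' = J⁻¹ M w`, the left-hand side is the derivative of `w* J w`.
theorem star_mulVec_dotProduct_add_dotProduct_mulVec [DecidableEq n] {J : Matrix n n 𝕜} (hJ : Jᴴ = -J) (hJu : IsUnit J.det) (M : Matrix n n 𝕜)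
    (w : n → 𝕜) :
    star ((J⁻¹ * M) *ᵥ w) ⬝ᵥ J *ᵥ w + star w ⬝ᵥ J *ᵥ ((J⁻¹ * M) *ᵥ w)
      = star w ⬝ᵥ (M - Mᴴ) *ᵥ w := by
  have hinv : (J⁻¹)ᴴ * J = -1 := by
    have h : (J⁻¹)ᴴ * Jᴴ = 1 := by
      rw [← conjTranspose_mul, mul_nonsing_inv _ hJu, conjTranspose_one]
    rw [hJ, Matrix.mul_neg] at h
    exact neg_eq_iff_eq_neg.mp h
  have hleft : (J⁻¹ * M)ᴴ * J = -Mᴴ := by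
    rw [conjTranspose_mul, Matrix.mul_assoc, hinv, Matrix.mul_neg, Matrix.mul_one]
  have hright : J * (J⁻¹ * M) = M := by
    rw [← Matrix.mul_assoc, mul_nonsing_inv _ hJu, Matrix.one_mul]
  rw [star_mulVec, dotProduct_mulVec, vecMul_vecMul, mulVec_mulVec, hleft, hright,
    ← dotProduct_mulVec, sub_mulVec, dotProduct_sub, neg_mulVec,
    dotProduct_neg, sub_eq_add_neg, add_comm]

theorem conjTranspose_conjTranspose_mul_mul_of_skew {J : Matrix n n 𝕜} (hJ : Jᴴ = -J)
    (T : Matrix n n 𝕜) : (Tᴴ * J * T)ᴴ = -(Tᴴ * J * T) := by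
  rw [conjTranspose_mul, conjTranspose_mul, conjTranspose_conjTranspose, hJ, Matrix.neg_mul,
    Matrix.mul_neg, Matrix.mul_assoc]

theorem isHermitian_neg_inv_I_smul_sub {J : Matrix n n ℂ} (hJ : Jᴴ = -J) (T₁ T₂ : Matrix n n ℂ) :
    (-(Complex.I⁻¹ • (T₂ᴴ * J * T₂ - T₁ᴴ * J * T₁))).IsHermitian := by
  rw [IsHermitian, conjTranspose_neg, conjTranspose_smul, conjTranspose_sub,
    conjTranspose_conjTranspose_mul_mul_of_skew hJ, conjTranspose_conjTranspose_mul_mul_of_skew hJ, Complex.inv_I,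
    star_neg, Complex.star_def, Complex.conj_I]
  module

theorem star_dotProduct_neg_inv_I_smul_mulVec (J T₁ T₂ : Matrix n n ℂ) (v : n → ℂ) :
    star v ⬝ᵥ (-(Complex.I⁻¹ • (T₂ᴴ * J * T₂ - T₁ᴴ * J * T₁))) *ᵥ v
      = Complex.I * (star (T₂ *ᵥ v) ⬝ᵥ J *ᵥ (T₂ *ᵥ v) - star (T₁ *ᵥ v) ⬝ᵥ J *ᵥ (T₁ *ᵥ v)) := by
  simp only [neg_mulVec, smul_mulVec, sub_mulVec, dotProduct_neg, dotProduct_smul,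
    dotProduct_sub, star_mulVec, ← mulVec_mulVec, dotProduct_mulVec, vecMul_vecMul,
    Complex.inv_I, smul_eq_mul]
  ring

end SkewForm

theorem jmat_conjTranspose : jmatᴴ = -jmat := by
  ext i k
  fin_cases i <;> fin_cases k <;> simp [jmat]

theorem isUnit_det_jmat : IsUnit jmat.det := by
  simp [jmat, det_fin_two]

theorem cplx_conjTranspose (A : Matrix (Fin 2) (Fin 2) ℝ) : (cplx A)ᴴ = cplx Aᵀ := by
  rw [cplx, cplx, ← conjTranspose_eq_transpose_of_trivial,
    conjTranspose_map _ fun x => (Complex.conj_ofReal x).symm]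

open scoped MatrixOrder in
theorem Matrix.PosSemidef.cplx {A : Matrix (Fin 2) (Fin 2) ℝ} (hA : A.PosSemidef) :
    (cplx A).PosSemidef := by
  obtain ⟨B, rfl⟩ := CStarAlgebra.nonneg_iff_eq_star_mul_self.mp hA.nonneg
  have hB : (B.map Complex.ofReal)ᴴ = Bᴴ.map Complex.ofReal :=
    (conjTranspose_map _ fun x => (Complex.conj_ofReal x).symm).symm
  have hmap : (Bᴴ * B).map Complex.ofReal = (B.map Complex.ofReal)ᴴ * B.map Complex.ofReal := by
    rw [hB]
    exact Matrix.map_mul (f := Complex.ofRealHom)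
  rw [_root_.cplx, star_eq_conjTranspose, hmap]
  exact posSemidef_conjTranspose_mul_self _

theorem Complex.I_mul_conj_sub_self (z : ℂ) :
    Complex.I * (starRingEnd ℂ z - z) = ((2 * z.im : ℝ) : ℂ) := by
  linear_combination (-Complex.I) * Complex.sub_conj z - ((2 * z.im : ℝ) : ℂ) * Complex.I_sq

theorem intervalIntegrable_hamiltonian_apply {μ : Measure ℝ} {a b : ℝ}
    {A B : ℝ → Matrix (Fin 2) (Fin 2) ℝ} (hA : ∀ i k, IntervalIntegrable (fun x => A x i k) μ a b)
    (hB : ∀ i k, IntervalIntegrable (fun x => B x i k) μ a b) (z : ℂ) (i k : Fin 2) :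
    IntervalIntegrable (fun x => ((-z) • cplx (A x) + cplx (B x)) i k) μ a b := by
  simpa [cplx] using ((hA i k).ofReal.const_mul (-z)).add (hB i k).ofReal

theorem hamiltonian_sub_conjTranspose (z : ℂ) {A B : Matrix (Fin 2) (Fin 2) ℝ} (hA : A.IsSymm)
    (hB : B.IsSymm) :
    (-z) • cplx A + cplx B - ((-z) • cplx A + cplx B)ᴴ = (starRingEnd ℂ z - z) • cplx A := by
  rw [conjTranspose_add, conjTranspose_smul, cplx_conjTranspose, cplx_conjTranspose, hA.eq, hB.eq,
    star_neg, Complex.star_def]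
  module

theorem intervalIntegrable_jmat_inv_hamiltonian_mul_apply {A B : ℝ → Matrix (Fin 2) (Fin 2) ℝ}
    {T : ℝ → Matrix (Fin 2) (Fin 2) ℂ}
    (hA : ∀ (L : ℝ) (i k : Fin 2), IntervalIntegrable (fun x => A x i k) volume 0 L)
    (hB : ∀ (L : ℝ) (i k : Fin 2), IntervalIntegrable (fun x => B x i k) volume 0 L)
    (hT : ∀ i k, Continuous fun x => T x i k) (z : ℂ) (a b : ℝ) (i k : Fin 2) :
    IntervalIntegrable (fun x => (jmat⁻¹ * (((-z) • cplx (A x) + cplx (B x)) * T x)) i k)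
      volume a b :=
  intervalIntegrable_const_mul_apply _ (intervalIntegrable_mul_apply_of_continuousOn
    (intervalIntegrable_hamiltonian_apply (fun i k => (hA a i k).symm.trans (hA b i k))
      (fun i k => (hB a i k).symm.trans (hB b i k)) z)
    fun j k => (hT j k).continuousOn) i k

theorem star_dotProduct_jmat_hamiltonian_mul (z : ℂ) {A B : Matrix (Fin 2) (Fin 2) ℝ}
    (hA : A.IsSymm) (hB : B.IsSymm) (T : Matrix (Fin 2) (Fin 2) ℂ) (v : Fin 2 → ℂ) :
    star ((jmat⁻¹ * (((-z) • cplx A + cplx B) * T)) *ᵥ v) ⬝ᵥ jmat *ᵥ (T *ᵥ v)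
        + star (T *ᵥ v) ⬝ᵥ jmat *ᵥ ((jmat⁻¹ * (((-z) • cplx A + cplx B) * T)) *ᵥ v)
      = (starRingEnd ℂ z - z) * (star (T *ᵥ v) ⬝ᵥ cplx A *ᵥ (T *ᵥ v)) := by
  rw [← Matrix.mul_assoc, ← mulVec_mulVec,
    star_mulVec_dotProduct_add_dotProduct_mulVec jmat_conjTranspose isUnit_det_jmat,
    hamiltonian_sub_conjTranspose z hA hB, smul_mulVec, dotProduct_smul, smul_eq_mul]

theorem stmt7 (A B : ℝ → Matrix (Fin 2) (Fin 2) ℝ)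
    (T : ℝ → ℂ → Matrix (Fin 2) (Fin 2) ℂ)
    (hIntA : ∀ (L : ℝ) (i k : Fin 2), IntervalIntegrable (fun x => A x i k) volume 0 L)
    (hIntB : ∀ (L : ℝ) (i k : Fin 2), IntervalIntegrable (fun x => B x i k) volume 0 L)
    (hA : ∀ᵐ x ∂(volume.restrict (Set.Ici (0:ℝ))), (A x).PosSemidef)
    (hB : ∀ᵐ x ∂(volume.restrict (Set.Ici (0:ℝ))), (B x).IsSymm)
    (hTc : ∀ (z : ℂ) (i k : Fin 2), Continuous fun x => T x z i k)
    (hT : ∀ (z : ℂ) (L : ℝ) (i k : Fin 2),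
      T L z i k = (1 : Matrix (Fin 2) (Fin 2) ℂ) i k
        + ∫ x in (0:ℝ)..L, (jmat⁻¹ * (((-z) • cplx (A x) + cplx (B x)) * T x z)) i k) :
    ∀ (z : ℂ), 0 < z.im → ∀ (x₁ x₂ : ℝ), 0 ≤ x₁ → x₁ ≤ x₂ →
      (-(Complex.I⁻¹ • ((T x₂ z)ᴴ * jmat * T x₂ z - (T x₁ z)ᴴ * jmat * T x₁ z))).PosSemidef := by
  intro z hz x₁ x₂ hx₁ h12
  set Y := fun x => jmat⁻¹ * (((-z) • cplx (A x) + cplx (B x)) * T x z)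
  have hY : ∀ a b i k, IntervalIntegrable (fun t => Y t i k) volume a b :=
    intervalIntegrable_jmat_inv_hamiltonian_mul_apply hIntA hIntB (hTc z) z
  have hTY : ∀ x i k, T x z i k = T x₁ z i k + ∫ t in x₁..x, Y t i k := fun x i k => by
    rw [hT z x, hT z x₁, add_assoc,
      intervalIntegral.integral_add_adjacent_intervals (hY 0 x₁ i k) (hY x₁ x i k)]
  have hIoc : ∀ᵐ x ∂(volume.restrict (Set.Ioc x₁ x₂)), (A x).PosSemidef ∧ (B x).IsSymm :=
    ae_restrict_of_ae_restrict_of_subset (fun t ht => hx₁.trans ht.1.le) (hA.and hB)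
  refine PosSemidef.of_dotProduct_mulVec_nonneg
    (isHermitian_neg_inv_I_smul_sub jmat_conjTranspose _ _) fun v => ?_
  set w := fun x => T x z *ᵥ v
  have hprod := integral_star_dotProduct_mulVec_add_eq_sub jmat (w := w) h12
    (intervalIntegrable_mulVec_apply (hY x₁ x₂) v)
    fun x _ => mulVec_apply_eq_add_integral (X := fun x => T x z) (hY x₁ x) (hTY x) v
  have hdens : ∀ᵐ x ∂volume, x ∈ Set.uIoc x₁ x₂ →
      star (Y x *ᵥ v) ⬝ᵥ jmat *ᵥ w x + star (w x) ⬝ᵥ jmat *ᵥ (Y x *ᵥ v)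
        = (starRingEnd ℂ z - z) * (star (w x) ⬝ᵥ cplx (A x) *ᵥ w x) := by
    rw [Set.uIoc_of_le h12, ← ae_restrict_iff' measurableSet_Ioc]
    filter_upwards [hIoc] with x ⟨hAx, hBx⟩
    exact star_dotProduct_jmat_hamiltonian_mul z (isHermitian_iff_isSymm.mp hAx.isHermitian) hBx
      (T x z) v
  have hdens_nonneg : 0 ≤ ∫ x in x₁..x₂, star (w x) ⬝ᵥ cplx (A x) *ᵥ w x := by
    rw [intervalIntegral.integral_of_le h12]
    exact integral_nonneg_of_ae (hIoc.mono fun x hx => hx.1.cplx.dotProduct_mulVec_nonneg _)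
  rw [star_dotProduct_neg_inv_I_smul_mulVec, ← hprod, intervalIntegral.integral_congr_ae hdens,
    intervalIntegral.integral_const_mul, ← mul_assoc, Complex.I_mul_conj_sub_self]
  exact mul_nonneg (Complex.zero_le_real.mpr (by positivity)) hdens_nonneg
end

section
/- Let m : ℂ₊ → ℂ₊ ∪ ℝ ∪ {∞} be an analytic map of the upper half-plane to the closed upper half-plane (a Herglotz function, possibly a real or infinite constant), and fix ξ ∈ ℝ. For r ≥ 1 define m_r(z) := m(ξ + z/r). If m_r converges locally uniformly on ℂ₊ (with respect to the chordal metric on the Riemann sphere) to some analytic function f as r → ∞, then f is a constant function. -/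
/-! The limit `f` is invariant under dilations: since `(l * z) / r = z / (r / l)` and
`r / l → ∞`, the limits `f (l * z)` and `f z` of `m (ξ + · / r)` coincide. So `f` is constant on
the positive imaginary axis, hence on `ℂ₊` by the identity theorem. -/

open Filter Complex Topology

theorem tendsto_comp_ofReal_mul_div_atTop {X : Type*} [TopologicalSpace X] (g : ℂ → X)
    {z : ℂ} {a : X} {l : ℝ} (hl : 0 < l)
    (h : Tendsto (fun r : ℝ => g (z / r)) atTop (𝓝 a)) :
    Tendsto (fun r : ℝ => g (l * z / r)) atTop (𝓝 a) := by
  have hdiv : Tendsto (fun r : ℝ => r / l) atTop atTop := tendsto_id.atTop_div_const hl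
  refine (h.comp hdiv).congr fun r => ?_
  simp only [Function.comp_apply, ofReal_div]
  rw [div_div_eq_mul_div, mul_comm]

theorem tendsto_ofReal_mul_nhdsNE {z : ℂ} (hz : z ≠ 0) :
    Tendsto (fun l : ℝ => (l : ℂ) * z) (𝓝[≠] 1) (𝓝[≠] z) := by
  refine tendsto_nhdsWithin_of_tendsto_nhds_of_eventually_within _ ?_ ?_
  · have hcont : Continuous fun l : ℝ => (l : ℂ) * z := by fun_prop
    simpa using (hcont.tendsto 1).mono_left nhdsWithin_le_nhds
  · filter_upwards [self_mem_nhdsWithin] with l hl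
    simpa [hz] using hl

theorem AnalyticOnNhd.eqOn_const_of_forall_ofReal_mul {E : Type*} [NormedAddCommGroup E]
    [NormedSpace ℂ E] {f : ℂ → E} {U : Set ℂ} {z : ℂ}
    (hf : AnalyticOnNhd ℂ f U) (hU : IsPreconnected U) (hzU : z ∈ U) (hz : z ≠ 0)
    (hray : ∀ l : ℝ, 0 < l → f (l * z) = f z) :
    Set.EqOn f (fun _ => f z) U := by
  have hpos : ∀ᶠ l : ℝ in 𝓝[≠] 1, 0 < l :=
    eventually_nhdsWithin_of_eventually_nhds (lt_mem_nhds one_pos)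
  have hfreq : ∃ᶠ w in 𝓝[≠] z, f w = f z :=
    (tendsto_ofReal_mul_nhdsNE hz).frequently (hpos.mono fun l hl => hray l hl).frequently
  exact hf.eqOn_of_preconnected_of_frequently_eq analyticOnNhd_const hU hzU hfreq

theorem stmt11_general (m f : ℂ → ℂ) (ξ : ℝ)
    (hf : DifferentiableOn ℂ f {z : ℂ | 0 < z.im})
    (hconv : TendstoLocallyUniformlyOn (fun (r : ℝ) (z : ℂ) => m ((ξ : ℂ) + z / (r : ℂ))) f
      Filter.atTop {z : ℂ | 0 < z.im}) :
    ∃ c : ℂ, Set.EqOn f (fun _ => c) {z : ℂ | 0 < z.im} := by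
  have hI : I ∈ {z : ℂ | 0 < z.im} := by simp
  have hray : ∀ l : ℝ, 0 < l → f (l * I) = f I := fun l hl =>
    tendsto_nhds_unique (hconv.tendsto_at (by simpa using hl))
      (tendsto_comp_ofReal_mul_div_atTop (fun w => m (ξ + w)) hl (hconv.tendsto_at hI))
  have hfa : AnalyticOnNhd ℂ f {z : ℂ | 0 < z.im} :=
    hf.analyticOnNhd (isOpen_lt continuous_const continuous_im)
  exact ⟨f I, hfa.eqOn_const_of_forall_ofReal_mul (convex_halfSpace_im_gt 0).isPreconnected hI
    I_ne_zero hray⟩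

theorem stmt11 (m f : ℂ → ℂ) (ξ : ℝ)
    (hm : DifferentiableOn ℂ m {z : ℂ | 0 < z.im})
    (hmap : Set.MapsTo m {z : ℂ | 0 < z.im} {z : ℂ | 0 ≤ z.im})
    (hf : DifferentiableOn ℂ f {z : ℂ | 0 < z.im})
    (hconv : TendstoLocallyUniformlyOn (fun (r : ℝ) (z : ℂ) => m ((ξ : ℂ) + z / (r : ℂ))) f
      Filter.atTop {z : ℂ | 0 < z.im}) :
    ∃ c : ℂ, Set.EqOn f (fun _ => c) {z : ℂ | 0 < z.im} :=
  stmt11_general m f ξ hf hconv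
end
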